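/- arXiv:2308.12781 — 3 statements merged into one kernel-verified Lean document; each statement's English description precedes it below -/
import Mathlib

section
/- Let A + λB be an n×n pencil over ℂ. Define the projection P(A) (resp. P(B)) by keeping the strictly upper triangular entries and all diagonal entries except the k-th, and setting all other entries to zero, where k minimizes |A_{ii}|² + |B_{ii}|² over i. Then P(A) + λP(B) is an upper triangular singular pencil, and for every upper triangular singular pencil S + λT it holds that ‖A − S‖_F² + ‖B − T‖_F² ≥ Σ_{i>j}(|A_{ij}|² + |B_{ij}|²) + min_{1≤i≤n}(|A_{ii}|² + |B_{ii}|²), with equality attained by S = P(A), T = P(B). -/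
/-!
An upper triangular approximation must cancel the whole strictly lower part of `A + λB`, and
since the determinant of an upper triangular pencil is the product of its diagonal entries, a
singular one also has some diagonal pair `(S i i, T i i) = (0, 0)`, costing at least
`|A i i|² + |B i i|²`. `Ptri k` pays exactly these costs, with `i = k` the cheapest diagonal pair.
-/

open Polynomial Matrix

noncomputable def pencilPoly {n : ℕ} (A B : Matrix (Fin n) (Fin n) ℂ) :
    Matrix (Fin n) (Fin n) (Polynomial ℂ) :=
  Matrix.of fun i j => C (A i j) + X * C (B i j)

def UpperTri {n : ℕ} (M : Matrix (Fin n) (Fin n) ℂ) : Prop :=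
  ∀ i j : Fin n, j < i → M i j = 0

/-- Squared Frobenius norm of the pencil `A + λ B`. -/
noncomputable def pencilNormSq {n : ℕ} (A B : Matrix (Fin n) (Fin n) ℂ) : ℝ :=
  (∑ i, ∑ j, ‖A i j‖ ^ 2) + ∑ i, ∑ j, ‖B i j‖ ^ 2

/-- The projection keeping the strictly upper triangular entries and all diagonal
entries except the `k`-th. -/
def Ptri {n : ℕ} (k : Fin n) (A : Matrix (Fin n) (Fin n) ℂ) : Matrix (Fin n) (Fin n) ℂ :=
  Matrix.of fun i j => if i < j ∨ (i = j ∧ i ≠ k) then A i j else 0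

lemma Polynomial.C_add_X_mul_C_eq_zero_iff {R : Type*} [Semiring R] {a b : R} :
    C a + X * C b = 0 ↔ a = 0 ∧ b = 0 := by
  refine ⟨fun h => ⟨?_, ?_⟩, fun ⟨ha, hb⟩ => by simp [ha, hb]⟩
  · simpa using congrArg (coeff · 0) h
  · simpa [coeff_X_mul] using congrArg (coeff · 1) h

section LowerUpperSplit

variable {ι M : Type*} [Fintype ι] [LinearOrder ι]

lemma sum_sum_eq_lower_add_upper [AddCommMonoid M] (g : ι → ι → M) :
    ∑ i, ∑ j, g i j =
      (∑ i, ∑ j, if j < i then g i j else 0) + ∑ i, ∑ j, if j < i then 0 else g i j := by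
  simp only [← Finset.sum_add_distrib, ite_add_ite, add_zero, zero_add, ite_self]

lemma le_sum_sum_upper [AddCommMonoid M] [PartialOrder M] [IsOrderedAddMonoid M]
    {g : ι → ι → M} (hg : ∀ i j, 0 ≤ g i j) (i₀ : ι) :
    g i₀ i₀ ≤ ∑ i, ∑ j, if j < i then 0 else g i j := by
  have hnonneg : ∀ i j, 0 ≤ if j < i then 0 else g i j := fun i j => by
    split_ifs
    exacts [le_rfl, hg i j]
  calc g i₀ i₀ = if i₀ < i₀ then 0 else g i₀ i₀ := (if_neg (lt_irrefl i₀)).symm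
    _ ≤ ∑ j, if j < i₀ then 0 else g i₀ j :=
      Finset.single_le_sum (fun j _ => hnonneg i₀ j) (Finset.mem_univ i₀)
    _ ≤ ∑ i, ∑ j, if j < i then 0 else g i j :=
      Finset.single_le_sum (fun i _ => Finset.sum_nonneg fun j _ => hnonneg i j)
        (Finset.mem_univ i₀)

lemma sum_sum_upper_eq_diag [AddCommMonoid M] {g : ι → ι → M} (k : ι)
    (hg : ∀ i j, i ≤ j → ¬(i = k ∧ j = k) → g i j = 0) :
    ∑ i, ∑ j, (if j < i then 0 else g i j) = g k k := by
  rw [Finset.sum_eq_single k, Finset.sum_eq_single k, if_neg (lt_irrefl k)]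
  · intro j _ hj
    split_ifs with h
    exacts [rfl, hg k j (not_lt.1 h) fun h' => hj h'.2]
  · simp
  · intro i _ hi
    refine Finset.sum_eq_zero fun j _ => ?_
    split_ifs with h
    exacts [rfl, hg i j (not_lt.1 h) fun h' => hi h'.1]
  · simp

end LowerUpperSplit

variable {n : ℕ}

lemma Ptri_apply_of_le {k i j : Fin n} (M : Matrix (Fin n) (Fin n) ℂ) (hij : i ≤ j)
    (hne : ¬(i = k ∧ j = k)) : Ptri k M i j = M i j := by
  refine if_pos ?_
  rcases hij.lt_or_eq with h | rfl
  · exact Or.inl h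
  · exact Or.inr ⟨rfl, fun h => hne ⟨h, h⟩⟩

lemma Ptri_upperTri (k : Fin n) (M : Matrix (Fin n) (Fin n) ℂ) : UpperTri (Ptri k M) := by
  intro i j hji
  refine if_neg ?_
  rintro (h | ⟨rfl, -⟩)
  exacts [lt_asymm h hji, lt_irrefl i hji]

lemma pencilPoly_isUpperTriangular {S T : Matrix (Fin n) (Fin n) ℂ}
    (hS : UpperTri S) (hT : UpperTri T) : (pencilPoly S T).IsUpperTriangular := by
  intro i j h
  simp [pencilPoly, hS i j h, hT i j h]

lemma det_pencilPoly_eq_zero_iff {S T : Matrix (Fin n) (Fin n) ℂ}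
    (hS : UpperTri S) (hT : UpperTri T) :
    (pencilPoly S T).det = 0 ↔ ∃ i, S i i = 0 ∧ T i i = 0 := by
  rw [det_of_isUpperTriangular (pencilPoly_isUpperTriangular hS hT), Finset.prod_eq_zero_iff]
  simp only [pencilPoly, of_apply, C_add_X_mul_C_eq_zero_iff, Finset.mem_univ,
    true_and]

lemma pencilNormSq_eq_sum (A B : Matrix (Fin n) (Fin n) ℂ) :
    pencilNormSq A B = ∑ i, ∑ j, (‖A i j‖ ^ 2 + ‖B i j‖ ^ 2) := by
  simp only [pencilNormSq, Finset.sum_add_distrib]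

lemma sum_lower_sub_of_upperTri (A B : Matrix (Fin n) (Fin n) ℂ)
    {S T : Matrix (Fin n) (Fin n) ℂ} (hS : UpperTri S) (hT : UpperTri T) :
    (∑ i, ∑ j, if j < i then ‖(A - S) i j‖ ^ 2 + ‖(B - T) i j‖ ^ 2 else 0) =
      ∑ i, ∑ j, if j < i then ‖A i j‖ ^ 2 + ‖B i j‖ ^ 2 else 0 := by
  refine Finset.sum_congr rfl fun i _ => Finset.sum_congr rfl fun j _ => ?_
  split_ifs with h
  · simp [hS i j h, hT i j h]
  · rfl

lemma sum_lower_add_diag_le_pencilNormSq_sub (A B : Matrix (Fin n) (Fin n) ℂ)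
    {S T : Matrix (Fin n) (Fin n) ℂ} (hS : UpperTri S) (hT : UpperTri T) {i₀ : Fin n}
    (hS₀ : S i₀ i₀ = 0) (hT₀ : T i₀ i₀ = 0) :
    (∑ i, ∑ j, if j < i then ‖A i j‖ ^ 2 + ‖B i j‖ ^ 2 else 0) +
        (‖A i₀ i₀‖ ^ 2 + ‖B i₀ i₀‖ ^ 2) ≤ pencilNormSq (A - S) (B - T) := by
  rw [pencilNormSq_eq_sum, sum_sum_eq_lower_add_upper fun i j => ‖(A - S) i j‖ ^ 2 + _,
    sum_lower_sub_of_upperTri A B hS hT]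
  have hdiag := le_sum_sum_upper (fun i j => by positivity : ∀ i j,
    0 ≤ ‖(A - S) i j‖ ^ 2 + ‖(B - T) i j‖ ^ 2) i₀
  simp only [Matrix.sub_apply, hS₀, hT₀, sub_zero] at hdiag
  exact add_le_add_right hdiag _

lemma pencilNormSq_sub_Ptri (A B : Matrix (Fin n) (Fin n) ℂ) (k : Fin n) :
    pencilNormSq (A - Ptri k A) (B - Ptri k B) =
      (∑ i, ∑ j, if j < i then ‖A i j‖ ^ 2 + ‖B i j‖ ^ 2 else 0) +
        (‖A k k‖ ^ 2 + ‖B k k‖ ^ 2) := by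
  rw [pencilNormSq_eq_sum, sum_sum_eq_lower_add_upper fun i j => ‖(A - Ptri k A) i j‖ ^ 2 + _,
    sum_lower_sub_of_upperTri A B (Ptri_upperTri k A) (Ptri_upperTri k B),
    sum_sum_upper_eq_diag k fun i j hij hne => by simp [Ptri_apply_of_le _ hij hne]]
  simp [Ptri]

/-- `P(A) + λ P(B)` is a nearest upper triangular singular pencil to `A + λ B`. -/
theorem nearest_upper_triangular_singular_pencil {n : ℕ}
    (A B : Matrix (Fin n) (Fin n) ℂ) (k : Fin n)
    (hk : ∀ i : Fin n, ‖A k k‖ ^ 2 + ‖B k k‖ ^ 2 ≤ ‖A i i‖ ^ 2 + ‖B i i‖ ^ 2) :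
    UpperTri (Ptri k A) ∧ UpperTri (Ptri k B) ∧
    (pencilPoly (Ptri k A) (Ptri k B)).det = 0 ∧
    (∀ S T : Matrix (Fin n) (Fin n) ℂ, UpperTri S → UpperTri T →
      (pencilPoly S T).det = 0 →
      (∑ i, ∑ j, if j < i then ‖A i j‖ ^ 2 + ‖B i j‖ ^ 2 else 0) +
        Finset.univ.inf' ⟨k, Finset.mem_univ k⟩ (fun i => ‖A i i‖ ^ 2 + ‖B i i‖ ^ 2)
        ≤ pencilNormSq (A - S) (B - T)) ∧
    pencilNormSq (A - Ptri k A) (B - Ptri k B) =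
      (∑ i, ∑ j, if j < i then ‖A i j‖ ^ 2 + ‖B i j‖ ^ 2 else 0) +
        Finset.univ.inf' ⟨k, Finset.mem_univ k⟩ (fun i => ‖A i i‖ ^ 2 + ‖B i i‖ ^ 2) := by
  have hmin : Finset.univ.inf' ⟨k, Finset.mem_univ k⟩ (fun i => ‖A i i‖ ^ 2 + ‖B i i‖ ^ 2) =
      ‖A k k‖ ^ 2 + ‖B k k‖ ^ 2 :=
    le_antisymm (Finset.inf'_le _ (Finset.mem_univ k)) (Finset.le_inf' _ _ fun i _ => hk i)
  rw [hmin]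
  refine ⟨Ptri_upperTri k A, Ptri_upperTri k B, ?_, fun S T hS hT hdet => ?_,
    pencilNormSq_sub_Ptri A B k⟩
  · exact (det_pencilPoly_eq_zero_iff (Ptri_upperTri k A) (Ptri_upperTri k B)).2
      ⟨k, by simp [Ptri], by simp [Ptri]⟩
  · obtain ⟨i, hSi, hTi⟩ := (det_pencilPoly_eq_zero_iff hS hT).1 hdet
    exact (add_le_add_right (hk i) _).trans
      (sum_lower_add_diag_le_pencilNormSq_sub A B hS hT hSi hTi)
end

section
/- Let f : U(n) × U(n) → ℝ be smooth, x ∈ U(n) × U(n), and u a tangent vector at x. Then the Riemannian Hessian of f at x in direction u equals Proj_x( Hess_E f(x)[u] − (1/2) u (x* ∇f(x) + ∇f(x)* x) ), where Proj_x is the orthogonal projection onto the tangent space, Hess_E is the Euclidean Hessian, ∇f the Euclidean gradient, and all operations on ordered pairs are elementwise. -/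
open Matrix

noncomputable local instance {n : ℕ} : NormedAddCommGroup (Matrix (Fin n) (Fin n) ℂ) :=
  Matrix.frobeniusNormedAddCommGroup

noncomputable local instance {n : ℕ} : NormedSpace ℝ (Matrix (Fin n) (Fin n) ℂ) :=
  Matrix.frobeniusNormedSpace

variable {n : ℕ}

/-- Elementwise product of ordered pairs of matrices. -/
noncomputable def pMul (p q : Matrix (Fin n) (Fin n) ℂ × Matrix (Fin n) (Fin n) ℂ) :
    Matrix (Fin n) (Fin n) ℂ × Matrix (Fin n) (Fin n) ℂ :=
  (p.1 * q.1, p.2 * q.2)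

/-- Elementwise conjugate transpose of an ordered pair of matrices. -/
noncomputable def pStar (p : Matrix (Fin n) (Fin n) ℂ × Matrix (Fin n) (Fin n) ℂ) :
    Matrix (Fin n) (Fin n) ℂ × Matrix (Fin n) (Fin n) ℂ :=
  (p.1ᴴ, p.2ᴴ)

/-- Skew-Hermitian part. -/
noncomputable def skewPart (X : Matrix (Fin n) (Fin n) ℂ) : Matrix (Fin n) (Fin n) ℂ :=
  (1 / 2 : ℂ) • (X - Xᴴ)

/-- Orthogonal projection onto the tangent space of `U(n) × U(n)` at `x`. -/
noncomputable def tangProj (x p : Matrix (Fin n) (Fin n) ℂ × Matrix (Fin n) (Fin n) ℂ) :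
    Matrix (Fin n) (Fin n) ℂ × Matrix (Fin n) (Fin n) ℂ :=
  (x.1 * skewPart (x.1ᴴ * p.1), x.2 * skewPart (x.2ᴴ * p.2))

/-- The real inner product on pairs of complex matrices. -/
noncomputable def rInner (p q : Matrix (Fin n) (Fin n) ℂ × Matrix (Fin n) (Fin n) ℂ) : ℝ :=
  (Matrix.trace (p.1ᴴ * q.1) + Matrix.trace (p.2ᴴ * q.2)).re

section

noncomputable local instance {n : ℕ} : TopologicalSpace (Matrix (Fin n) (Fin n) ℂ) :=
  @UniformSpace.toTopologicalSpace _ (@PseudoMetricSpace.toUniformSpace _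
    (@SeminormedAddCommGroup.toPseudoMetricSpace _
      (@NormedAddCommGroup.toSeminormedAddCommGroup _ inferInstance)))

noncomputable local instance {n : ℕ} : AddCommGroup (Matrix (Fin n) (Fin n) ℂ) :=
  @SeminormedAddCommGroup.toAddCommGroup _
    (@NormedAddCommGroup.toSeminormedAddCommGroup _ inferInstance)

noncomputable local instance {n : ℕ} : AddCommMonoid (Matrix (Fin n) (Fin n) ℂ) :=
  @AddCommGroup.toAddCommMonoid _ (@SeminormedAddCommGroup.toAddCommGroup _
    (@NormedAddCommGroup.toSeminormedAddCommGroup _ inferInstance))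

noncomputable local instance {n : ℕ} : Module ℝ (Matrix (Fin n) (Fin n) ℂ) :=
  @NormedSpace.toModule ℝ _ _ _ inferInstance

noncomputable def ctL : Matrix (Fin n) (Fin n) ℂ →L[ℝ] Matrix (Fin n) (Fin n) ℂ :=
  LinearMap.toContinuousLinearMap
    { toFun := fun X => Xᴴ
      map_add' := fun X Y => Matrix.conjTranspose_add X Y
      map_smul' := fun r X => by ext i j; simp [Matrix.conjTranspose_apply] }

noncomputable def skewL : Matrix (Fin n) (Fin n) ℂ →L[ℝ] Matrix (Fin n) (Fin n) ℂ :=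
  LinearMap.toContinuousLinearMap
    { toFun := skewPart
      map_add' := fun X Y => by
        rw [skewPart, skewPart, skewPart, Matrix.conjTranspose_add, ← smul_add, sub_add_sub_comm]
      map_smul' := fun r X => by
        ext i j
        simp [skewPart, Matrix.conjTranspose_apply, smul_sub]
        ring }

noncomputable def mulL : Matrix (Fin n) (Fin n) ℂ →L[ℝ] Matrix (Fin n) (Fin n) ℂ →L[ℝ] Matrix (Fin n) (Fin n) ℂ :=
  LinearMap.toContinuousLinearMap
    { toFun := fun A => LinearMap.toContinuousLinearMap
        { toFun := fun B => A * B
          map_add' := fun B C => Matrix.mul_add A B C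
          map_smul' := fun r B => (Matrix.mul_smul A r B) }
      map_add' := fun A B => by ext C; simp [Matrix.add_mul]
      map_smul' := fun r A => by ext C; simp [Matrix.smul_mul] }

@[simp] lemma mulL_apply (A B : Matrix (Fin n) (Fin n) ℂ) : mulL A B = A * B := rfl
@[simp] lemma ctL_apply (A : Matrix (Fin n) (Fin n) ℂ) : ctL A = Aᴴ := rfl
@[simp] lemma skewL_apply (A : Matrix (Fin n) (Fin n) ℂ) : skewL A = skewPart A := rfl

theorem hasFDerivAt_mul' {E : Type*} [NormedAddCommGroup E] [NormedSpace ℝ E]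
    {a b : E → Matrix (Fin n) (Fin n) ℂ} {a' b' : E →L[ℝ] Matrix (Fin n) (Fin n) ℂ} {x : E}
    (ha : HasFDerivAt a a' x) (hb : HasFDerivAt b b' x) :
    HasFDerivAt (fun y => a y * b y)
      ((mulL (a x)).comp b' + (mulL.comp a').flip (b x)) x := by
  have h1 : HasFDerivAt (fun y => mulL (a y)) (mulL.comp a') x :=
    (mulL.hasFDerivAt).comp x ha
  exact h1.clm_apply hb

lemma core (A B S : Matrix (Fin n) (Fin n) ℂ) (hS : Sᴴ = -S) :
    skewPart (skewPart (B + -(S * A)) + S * skewPart A)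
      = skewPart (B - (1 / 2 : ℂ) • (S * A + S * Aᴴ)) := by
  simp only [skewPart, Matrix.conjTranspose_add, Matrix.conjTranspose_sub,
    Matrix.conjTranspose_smul, Matrix.conjTranspose_mul, Matrix.conjTranspose_neg,
    Matrix.conjTranspose_conjTranspose, hS, star_div₀, star_one, RCLike.star_def,
    map_ofNat, Complex.conj_ofNat, star_ofNat, mul_add, mul_sub, add_mul, sub_mul,
    neg_mul, mul_neg, smul_sub, smul_add, smul_neg, neg_neg, mul_smul_comm,
    smul_mul_assoc, Matrix.neg_mul, Matrix.mul_neg, Matrix.smul_mul, Matrix.mul_smul]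
  module

lemma key (x g g' S : Matrix (Fin n) (Fin n) ℂ) (hx : xᴴ * x = 1) (hS : Sᴴ = -S) :
    x * skewPart (xᴴ * (x * skewPart (xᴴ * g' + (x * S)ᴴ * g) + x * S * skewPart (xᴴ * g)))
      = x * skewPart (xᴴ * (g' - (1 / 2 : ℝ) • (x * S * (xᴴ * g + gᴴ * x)))) := by
  have hx' : ∀ Z : Matrix (Fin n) (Fin n) ℂ, xᴴ * (x * Z) = Z := fun Z => by
    rw [← Matrix.mul_assoc, hx, Matrix.one_mul]
  have e1 : (x * S)ᴴ * g = -(S * (xᴴ * g)) := by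
    rw [Matrix.conjTranspose_mul, hS]
    simp [Matrix.mul_assoc]
  have e2 : gᴴ * x = (xᴴ * g)ᴴ := by
    rw [Matrix.conjTranspose_mul, Matrix.conjTranspose_conjTranspose]
  have e3 : (1 / 2 : ℝ) • (S * (xᴴ * g) + S * (xᴴ * g)ᴴ)
      = (1 / 2 : ℂ) • (S * (xᴴ * g) + S * (xᴴ * g)ᴴ) := by
    rw [← algebraMap_smul ℂ (1 / 2 : ℝ)]
    norm_num
  congr 1
  rw [e1, e2, Matrix.mul_add, hx', Matrix.mul_assoc x S, hx', Matrix.mul_sub,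
    Matrix.mul_assoc x S, Matrix.mul_smul, hx', Matrix.mul_add S, e3]
  exact core (xᴴ * g) (xᴴ * g') S hS

end

/-- The Riemannian Hessian of a smooth `f : U(n) × U(n) → ℝ` (defined, following the
embedded-submanifold formula, as `Proj_x (D Ḡ (x)[u])` with `Ḡ(x) = Proj_x (∇ f (x))`)
equals `Proj_x ( Hess_E f(x)[u] − ½ u (x* ∇f(x) + ∇f(x)* x) )`. -/
theorem riemannian_hessian_unitary_product
    (f : Matrix (Fin n) (Fin n) ℂ × Matrix (Fin n) (Fin n) ℂ → ℝ)
    (hf : ContDiff ℝ (⊤ : ℕ∞) f)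
    (G : Matrix (Fin n) (Fin n) ℂ × Matrix (Fin n) (Fin n) ℂ →
      Matrix (Fin n) (Fin n) ℂ × Matrix (Fin n) (Fin n) ℂ)
    (hG : ∀ x v, fderiv ℝ f x v = rInner (G x) v)      -- `G` is the Euclidean gradient of `f`
    (hGdiff : Differentiable ℝ G)
    (x u : Matrix (Fin n) (Fin n) ℂ × Matrix (Fin n) (Fin n) ℂ)
    (hx₁ : x.1 ∈ Matrix.unitaryGroup (Fin n) ℂ) (hx₂ : x.2 ∈ Matrix.unitaryGroup (Fin n) ℂ)
    (hu : ∃ S₁ S₂ : Matrix (Fin n) (Fin n) ℂ,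
      S₁ᴴ = -S₁ ∧ S₂ᴴ = -S₂ ∧ u = (x.1 * S₁, x.2 * S₂)) :
    tangProj x (fderiv ℝ (fun y => tangProj y (G y)) x u) =
      tangProj x (fderiv ℝ G x u -
        (1 / 2 : ℝ) • pMul u (pMul (pStar x) (G x) + pMul (pStar (G x)) x)) := by
  classical
  obtain ⟨S₁, S₂, hS₁, hS₂, rfl⟩ := hu
  have hG' : HasFDerivAt G (fderiv ℝ G x) x := (hGdiff x).hasFDerivAt
  have h1 : HasFDerivAt (fun y : Matrix (Fin n) (Fin n) ℂ × Matrix (Fin n) (Fin n) ℂ => y.1) (ContinuousLinearMap.fst ℝ _ _) x :=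
    hasFDerivAt_fst
  have h2 : HasFDerivAt (fun y : Matrix (Fin n) (Fin n) ℂ × Matrix (Fin n) (Fin n) ℂ => y.2) (ContinuousLinearMap.snd ℝ _ _) x :=
    hasFDerivAt_snd
  have hG1 : HasFDerivAt (fun y => (G y).1)
      ((ContinuousLinearMap.fst ℝ _ _).comp (fderiv ℝ G x)) x := hasFDerivAt_fst.comp x hG'
  have hG2 : HasFDerivAt (fun y => (G y).2)
      ((ContinuousLinearMap.snd ℝ _ _).comp (fderiv ℝ G x)) x := hasFDerivAt_snd.comp x hG'
  have hct1 : HasFDerivAt (fun y : Matrix (Fin n) (Fin n) ℂ × Matrix (Fin n) (Fin n) ℂ => (y.1)ᴴ)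
      (ctL.comp (ContinuousLinearMap.fst ℝ _ _)) x := ctL.hasFDerivAt.comp x h1
  have hct2 : HasFDerivAt (fun y : Matrix (Fin n) (Fin n) ℂ × Matrix (Fin n) (Fin n) ℂ => (y.2)ᴴ)
      (ctL.comp (ContinuousLinearMap.snd ℝ _ _)) x := ctL.hasFDerivAt.comp x h2
  have hin1 := hasFDerivAt_mul' hct1 hG1
  have hin2 := hasFDerivAt_mul' hct2 hG2
  have hsk1 := skewL.hasFDerivAt.comp x hin1
  have hsk2 := skewL.hasFDerivAt.comp x hin2
  have hF1 := hasFDerivAt_mul' h1 hsk1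
  have hF2 := hasFDerivAt_mul' h2 hsk2
  have hF : HasFDerivAt (fun y => tangProj y (G y)) _ x := hF1.prodMk hF2
  rw [hF.fderiv]
  simp only [ContinuousLinearMap.prod_apply, ContinuousLinearMap.add_apply,
    ContinuousLinearMap.comp_apply, ContinuousLinearMap.flip_apply,
    ContinuousLinearMap.coe_fst', ContinuousLinearMap.coe_snd',
    mulL_apply, skewL_apply, ctL_apply, tangProj, pMul, pStar, Prod.fst_sub, Prod.snd_sub,
    Prod.smul_fst, Prod.smul_snd, Prod.fst_add, Prod.snd_add, Prod.mk.injEq, Function.comp_apply]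
  refine ⟨?_, ?_⟩
  · exact key x.1 (G x).1 ((fderiv ℝ G x) (x.1 * S₁, x.2 * S₂)).1 S₁
      (Matrix.mem_unitaryGroup_iff'.mp hx₁) hS₁
  · exact key x.2 (G x).2 ((fderiv ℝ G x) (x.1 * S₁, x.2 * S₂)).2 S₂
      (Matrix.mem_unitaryGroup_iff'.mp hx₂) hS₂
end

section
/- Let S + λT be a real singular n×n pencil, i.e., S, T ∈ ℝ^{n×n} with det(S + λT) identically zero. Then there exist real special orthogonal matrices Q, Z ∈ SO(n) such that QSZ and QTZ are both upper triangular. -/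
open Polynomial Matrix

variable {n : ℕ}

noncomputable def pencilPolyR (S T : Matrix (Fin n) (Fin n) ℝ) :
    Matrix (Fin n) (Fin n) (Polynomial ℝ) :=
  Matrix.of fun i j => C (S i j) + X * C (T i j)

def UpperTriR (M : Matrix (Fin n) (Fin n) ℝ) : Prop :=
  ∀ i j : Fin n, j < i → M i j = 0

/-!
If `det (S + λT) = 0`, a nonzero polynomial vector `v(λ)` with `(S + λT) v(λ) = 0` exists, and
comparing top coefficients shows that its leading coefficient `x` satisfies `T x = 0`. An
orthogonal `Z` with first column `x / ‖x‖` and an orthogonal `Q` sending `S x` to a multiple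
`r e₀` of the first basis vector make the first columns of `QSZ` and `QTZ` equal to `r e₀` and
`0`. If `r ≠ 0`, the trailing `(n-1) × (n-1)` pencil is again singular and we recurse. If `r = 0`,
the first column vanishes and what remains is a tall `n × (n-1)` pencil.

A tall `m × k` pencil (`k < m`) is made zero below its `(m-k)`-th subdiagonal by the transposed
step: for dimension reasons `T` has a nonzero left null vector, which lets us clear the last row
of `T` and all of the last row of `S` except its last entry, and we recurse on the leading block.

Finally, multiplying `Q` and `Z` by diagonal matrices `diag(±1, 1, …, 1)` makes both
determinants `1` without destroying triangularity.
-/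

section

variable {m k : ℕ}

theorem sum_mul_eq_ite_of_mem_orthogonalGroup {Q : Matrix (Fin m) (Fin m) ℝ}
    (hQ : Q ∈ orthogonalGroup (Fin m) ℝ) (i j : Fin m) :
    ∑ a, Q i a * Q j a = if i = j then 1 else 0 := by
  simpa [mul_apply, one_apply] using congrFun (congrFun ((mem_orthogonalGroup_iff _ _).1 hQ) i) j

theorem det_mul_self_of_mem_orthogonalGroup {Q : Matrix (Fin m) (Fin m) ℝ}
    (hQ : Q ∈ orthogonalGroup (Fin m) ℝ) : Q.det * Q.det = 1 := by
  simpa using congrArg det ((mem_orthogonalGroup_iff _ _).1 hQ)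

theorem exists_mem_orthogonalGroup_eq_smul_row (x : Fin m → ℝ) (i₀ : Fin m) :
    ∃ Q ∈ orthogonalGroup (Fin m) ℝ, ∃ c : ℝ, x = c • Q.row i₀ := by
  by_cases hx : x = 0
  · exact ⟨1, one_mem _, 0, by simp [hx]⟩
  set v : EuclideanSpace ℝ (Fin m) := WithLp.toLp 2 x
  have hv : v ≠ 0 := by simpa [v] using hx
  have hu : Orthonormal ℝ (({i₀} : Set (Fin m)).domRestrict fun _ => ‖v‖⁻¹ • v) := by
    rw [orthonormal_subsingleton_iff]
    intro _
    simp only [Set.domRestrict_apply]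
    rw [norm_smul, norm_inv, norm_norm, inv_mul_cancel₀ (norm_ne_zero_iff.2 hv)]
  obtain ⟨b, hb⟩ := hu.exists_orthonormalBasis_extension_of_card_eq (by simp)
  refine ⟨((EuclideanSpace.basisFun (Fin m) ℝ).toBasis.toMatrix b)ᵀ,
    transpose_mem_unitaryGroup_iff.2
      (OrthonormalBasis.toMatrix_orthonormalBasis_mem_orthogonal _ _), ‖v‖, ?_⟩
  ext j
  have := congrArg (fun w => w j) (hb i₀ rfl)
  simp [Module.Basis.toMatrix_apply, this, v, mul_inv_cancel_left₀ (norm_ne_zero_iff.2 hv)]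

theorem exists_diagonal_mem_orthogonalGroup_det_eq {Q : Matrix (Fin m) (Fin m) ℝ}
    (hQ : Q ∈ orthogonalGroup (Fin m) ℝ) :
    ∃ u : Fin m → ℝ, diagonal u ∈ orthogonalGroup (Fin m) ℝ ∧ (diagonal u).det = Q.det := by
  cases m with
  | zero => exact ⟨0, (mem_orthogonalGroup_iff _ _).2 (Subsingleton.elim _ _), by simp⟩
  | succ m =>
    refine ⟨Function.update 1 0 Q.det, ?_, by simp [Fin.prod_univ_succ]⟩
    rw [mem_orthogonalGroup_iff, diagonal_transpose, diagonal_mul_diagonal, ← diagonal_one]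
    congr 1
    ext i
    rcases eq_or_ne i 0 with rfl | hi
    · simpa using det_mul_self_of_mem_orthogonalGroup hQ
    · simp [hi]

/-- `padFirst P = diag(1, P)` and `padLast P = diag(P, 1)`. -/
def padFirst (P : Matrix (Fin m) (Fin m) ℝ) : Matrix (Fin (m + 1)) (Fin (m + 1)) ℝ :=
  Matrix.of (Fin.cons (Fin.cons 1 0) fun i => Fin.cons 0 (P i))

def padLast (P : Matrix (Fin m) (Fin m) ℝ) : Matrix (Fin (m + 1)) (Fin (m + 1)) ℝ :=
  Matrix.of (Fin.snoc (fun i => Fin.snoc (P i) 0) (Fin.snoc 0 1))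

theorem padFirst_mem_orthogonalGroup {P : Matrix (Fin m) (Fin m) ℝ}
    (hP : P ∈ orthogonalGroup (Fin m) ℝ) : padFirst P ∈ orthogonalGroup (Fin (m + 1)) ℝ := by
  rw [mem_orthogonalGroup_iff]
  ext i j
  refine Fin.cases ?_ (fun i => ?_) i <;> refine Fin.cases ?_ (fun j => ?_) j <;>
    simp [padFirst, mul_apply, Fin.sum_univ_succ, one_apply,
      sum_mul_eq_ite_of_mem_orthogonalGroup hP, (Fin.succ_ne_zero _).symm]

theorem padLast_mem_orthogonalGroup {P : Matrix (Fin m) (Fin m) ℝ}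
    (hP : P ∈ orthogonalGroup (Fin m) ℝ) : padLast P ∈ orthogonalGroup (Fin (m + 1)) ℝ := by
  rw [mem_orthogonalGroup_iff]
  ext i j
  refine Fin.lastCases ?_ (fun i => ?_) i <;> refine Fin.lastCases ?_ (fun j => ?_) j <;>
    simp [padLast, mul_apply, Fin.sum_univ_castSucc, one_apply,
      sum_mul_eq_ite_of_mem_orthogonalGroup hP, (Fin.castSucc_ne_last _).symm]

theorem exists_orthogonal_col_eq_single (S T : Matrix (Fin m) (Fin k) ℝ) {x : Fin k → ℝ}
    (hx : x ≠ 0) (hTx : T *ᵥ x = 0) (i₀ : Fin m) (j₀ : Fin k) :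
    ∃ Q ∈ orthogonalGroup (Fin m) ℝ, ∃ Z ∈ orthogonalGroup (Fin k) ℝ, ∃ r : ℝ,
      (Q * S * Z).col j₀ = Pi.single i₀ r ∧ (Q * T * Z).col j₀ = 0 := by
  obtain ⟨P, hP, c, rfl⟩ := exists_mem_orthogonalGroup_eq_smul_row x j₀
  have hc : c ≠ 0 := by rintro rfl; exact hx (zero_smul ℝ _)
  obtain ⟨Q, hQ, r, hr⟩ := exists_mem_orthogonalGroup_eq_smul_row (S *ᵥ P.row j₀) i₀
  have hcol (M : Matrix (Fin m) (Fin k) ℝ) : (Q * M * Pᵀ).col j₀ = Q *ᵥ M *ᵥ P.row j₀ := by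
    rw [← mulVec_single_one, ← mulVec_mulVec, ← mulVec_mulVec, mulVec_single_one,
      col_transpose]
  refine ⟨Q, hQ, Pᵀ, transpose_mem_unitaryGroup_iff.2 hP, r, ?_, ?_⟩
  · rw [hcol, hr, mulVec_smul]
    ext i
    simp [mulVec, dotProduct, sum_mul_eq_ite_of_mem_orthogonalGroup hQ, Pi.single_apply]
  · rw [mulVec_smul, smul_eq_zero] at hTx
    rw [hcol, hTx.resolve_left hc, mulVec_zero]

theorem exists_orthogonal_row_eq_single (A B : Matrix (Fin m) (Fin k) ℝ) {x : Fin m → ℝ}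
    (hx : x ≠ 0) (hxB : x ᵥ* B = 0) (i₀ : Fin m) (j₀ : Fin k) :
    ∃ Q ∈ orthogonalGroup (Fin m) ℝ, ∃ Z ∈ orthogonalGroup (Fin k) ℝ, ∃ r : ℝ,
      (Q * A * Z).row i₀ = Pi.single j₀ r ∧ (Q * B * Z).row i₀ = 0 := by
  obtain ⟨Q, hQ, Z, hZ, r, hA, hB⟩ :=
    exists_orthogonal_col_eq_single Aᵀ Bᵀ hx (by rwa [mulVec_transpose]) j₀ i₀
  refine ⟨Zᵀ, transpose_mem_unitaryGroup_iff.2 hZ, Qᵀ, transpose_mem_unitaryGroup_iff.2 hQ, r,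
    ?_, ?_⟩
  · rw [← col_transpose]
    simpa only [transpose_mul, transpose_transpose, Matrix.mul_assoc] using hA
  · rw [← col_transpose]
    simpa only [transpose_mul, transpose_transpose, Matrix.mul_assoc] using hB

theorem exists_vecMul_eq_zero_of_lt (B : Matrix (Fin m) (Fin k) ℝ) (h : k < m) :
    ∃ x ≠ 0, x ᵥ* B = 0 := by
  obtain ⟨x, hx, hx0⟩ := Submodule.exists_mem_ne_zero_of_ne_bot
    (LinearMap.ker_ne_bot_of_finrank_lt (f := B.vecMulLinear) (by simpa using h))
  exact ⟨x, hx0, hx⟩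

theorem coeff_succ_pencilPolyR_mulVec (S T : Matrix (Fin n) (Fin n) ℝ) (v : Fin n → ℝ[X])
    (d : ℕ) (i : Fin n) :
    ((pencilPolyR S T *ᵥ v) i).coeff (d + 1) =
      (S *ᵥ fun j => (v j).coeff (d + 1)) i + (T *ᵥ fun j => (v j).coeff d) i := by
  simp [pencilPolyR, mulVec, dotProduct, add_mul, mul_assoc, Finset.sum_add_distrib]

theorem exists_mulVec_eq_zero_of_det_pencilPolyR_eq_zero {S T : Matrix (Fin n) (Fin n) ℝ}
    (h : (pencilPolyR S T).det = 0) : ∃ x ≠ 0, T *ᵥ x = 0 := by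
  obtain ⟨v, hv, hSTv⟩ := exists_mulVec_eq_zero_iff.2 h
  obtain ⟨i₀, hi₀⟩ := Function.ne_iff.1 hv
  obtain ⟨j₀, -, hj₀⟩ :=
    Finset.univ.exists_max_image (fun i => (v i).degree) ⟨i₀, Finset.mem_univ _⟩
  have hvj₀ : v j₀ ≠ 0 := fun h0 => hi₀ (by simpa [h0] using hj₀ i₀ (Finset.mem_univ _))
  set d := (v j₀).natDegree
  have htop : (fun j => (v j).coeff (d + 1)) = 0 := funext fun j =>
    coeff_eq_zero_of_degree_lt <| (hj₀ j (Finset.mem_univ _)).trans_lt <|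
      degree_le_natDegree.trans_lt (by exact_mod_cast d.lt_succ_self)
  refine ⟨fun j => (v j).coeff d, Function.ne_iff.2 ⟨j₀, by simpa [d] using hvj₀⟩, ?_⟩
  ext i
  simpa [hSTv, htop] using (coeff_succ_pencilPolyR_mulVec S T v d i).symm

theorem pencilPolyR_eq_map_add_smul_map (S T : Matrix (Fin n) (Fin n) ℝ) :
    pencilPolyR S T = S.map C + (X : ℝ[X]) • T.map C := by
  ext i j
  simp [pencilPolyR]

theorem det_pencilPolyR_mul_mul (Q S T Z : Matrix (Fin n) (Fin n) ℝ) :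
    (pencilPolyR (Q * S * Z) (Q * T * Z)).det = C (Q.det * Z.det) * (pencilPolyR S T).det := by
  have hconj : pencilPolyR (Q * S * Z) (Q * T * Z) = Q.map C * pencilPolyR S T * Z.map C := by
    simp only [pencilPolyR_eq_map_add_smul_map, Matrix.map_mul, Matrix.mul_add, Matrix.add_mul,
      Matrix.mul_smul, Matrix.smul_mul]
  rw [hconj, det_mul, det_mul, ← RingHom.mapMatrix_apply, ← RingHom.mapMatrix_apply,
    ← RingHom.map_det, ← RingHom.map_det, map_mul]
  ring

theorem det_pencilPolyR_of_col_zero {M N : Matrix (Fin (n + 1)) (Fin (n + 1)) ℝ} {r : ℝ}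
    (hM : M.col 0 = Pi.single 0 r) (hN : N.col 0 = 0) :
    (pencilPolyR M N).det =
      C r * (pencilPolyR (M.submatrix Fin.succ Fin.succ) (N.submatrix Fin.succ Fin.succ)).det := by
  have hM' (i : Fin (n + 1)) : M i 0 = (Pi.single 0 r : Fin (n + 1) → ℝ) i := congrFun hM i
  have hN' (i : Fin (n + 1)) : N i 0 = 0 := congrFun hN i
  have hminor : (pencilPolyR M N).submatrix (Fin.succAbove 0) Fin.succ =
      pencilPolyR (M.submatrix Fin.succ Fin.succ) (N.submatrix Fin.succ Fin.succ) := by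
    rw [Fin.succAbove_zero]
    rfl
  rw [det_succ_column_zero, Fin.sum_univ_succ, hminor]
  simp [pencilPolyR, hM', hN']

def IsZeroBelowSubdiag (d : ℕ) (M : Matrix (Fin m) (Fin k) ℝ) : Prop :=
  ∀ (i : Fin m) (j : Fin k), (j : ℕ) + d < i → M i j = 0

def HasSchurForm (d : ℕ) (S T : Matrix (Fin m) (Fin k) ℝ) : Prop :=
  ∃ Q ∈ orthogonalGroup (Fin m) ℝ, ∃ Z ∈ orthogonalGroup (Fin k) ℝ,
    IsZeroBelowSubdiag d (Q * S * Z) ∧ IsZeroBelowSubdiag d (Q * T * Z)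

theorem HasSchurForm.of_mul_mul {d : ℕ} {S T : Matrix (Fin m) (Fin k) ℝ}
    {Q : Matrix (Fin m) (Fin m) ℝ} {Z : Matrix (Fin k) (Fin k) ℝ}
    (hQ : Q ∈ orthogonalGroup (Fin m) ℝ) (hZ : Z ∈ orthogonalGroup (Fin k) ℝ)
    (h : HasSchurForm d (Q * S * Z) (Q * T * Z)) : HasSchurForm d S T := by
  obtain ⟨Q₁, hQ₁, Z₁, hZ₁, hS, hT⟩ := h
  refine ⟨Q₁ * Q, mul_mem hQ₁ hQ, Z * Z₁, mul_mem hZ hZ₁, ?_, ?_⟩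
  · simpa only [Matrix.mul_assoc] using hS
  · simpa only [Matrix.mul_assoc] using hT

theorem isZeroBelowSubdiag_padFirst_mul_mul {d : ℕ} {M : Matrix (Fin (m + 1)) (Fin (k + 1)) ℝ}
    {Q : Matrix (Fin m) (Fin m) ℝ} {Z : Matrix (Fin k) (Fin k) ℝ} (hM : ∀ i : Fin m, M i.succ 0 = 0)
    (h : IsZeroBelowSubdiag d (Q * M.submatrix Fin.succ Fin.succ * Z)) :
    IsZeroBelowSubdiag d (padFirst Q * M * padFirst Z) := by
  intro i j hij
  rcases Fin.eq_zero_or_eq_succ i with rfl | ⟨i, rfl⟩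
  · simp at hij
  rcases Fin.eq_zero_or_eq_succ j with rfl | ⟨j, rfl⟩
  · simp [padFirst, mul_apply, Fin.sum_univ_succ, hM]
  · have := h i j (by simp at hij; omega)
    simpa [padFirst, mul_apply, Fin.sum_univ_succ, Finset.sum_mul] using this

theorem isZeroBelowSubdiag_mul_padFirst {d : ℕ} {M : Matrix (Fin m) (Fin (k + 1)) ℝ}
    {Q : Matrix (Fin m) (Fin m) ℝ} {Z : Matrix (Fin k) (Fin k) ℝ} (hM : ∀ i : Fin m, M i 0 = 0)
    (h : IsZeroBelowSubdiag (d + 1) (Q * M.submatrix id Fin.succ * Z)) :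
    IsZeroBelowSubdiag d (Q * M * padFirst Z) := by
  intro i j hij
  rcases Fin.eq_zero_or_eq_succ j with rfl | ⟨j, rfl⟩
  · simp [padFirst, mul_apply, Fin.sum_univ_succ, hM]
  · have := h i j (by simp at hij; omega)
    simpa [padFirst, mul_apply, Fin.sum_univ_succ, Finset.sum_mul] using this

theorem isZeroBelowSubdiag_padLast_mul_mul {d : ℕ} {M : Matrix (Fin (m + 1)) (Fin (k + 1)) ℝ}
    {Q : Matrix (Fin m) (Fin m) ℝ} {Z : Matrix (Fin k) (Fin k) ℝ} (hd : m ≤ k + d)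
    (hM : ∀ j : Fin k, M (Fin.last m) j.castSucc = 0)
    (h : IsZeroBelowSubdiag d (Q * M.submatrix Fin.castSucc Fin.castSucc * Z)) :
    IsZeroBelowSubdiag d (padLast Q * M * padLast Z) := by
  intro i j hij
  rcases Fin.eq_castSucc_or_eq_last j with ⟨j, rfl⟩ | rfl
  swap
  · have := i.isLt
    simp at hij
    omega
  rcases Fin.eq_castSucc_or_eq_last i with ⟨i, rfl⟩ | rfl
  · have := h i j (by simpa using hij)
    simpa [padLast, mul_apply, Fin.sum_univ_castSucc, Finset.sum_mul] using this
  · simp [padLast, mul_apply, Fin.sum_univ_castSucc, hM]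

theorem HasSchurForm.of_submatrix_succ {d : ℕ} {M N : Matrix (Fin (m + 1)) (Fin (k + 1)) ℝ}
    (hM : ∀ i : Fin m, M i.succ 0 = 0) (hN : ∀ i : Fin m, N i.succ 0 = 0)
    (h : HasSchurForm d (M.submatrix Fin.succ Fin.succ) (N.submatrix Fin.succ Fin.succ)) :
    HasSchurForm d M N :=
  let ⟨Q, hQ, Z, hZ, hMZ, hNZ⟩ := h
  ⟨padFirst Q, padFirst_mem_orthogonalGroup hQ, padFirst Z, padFirst_mem_orthogonalGroup hZ,
    isZeroBelowSubdiag_padFirst_mul_mul hM hMZ, isZeroBelowSubdiag_padFirst_mul_mul hN hNZ⟩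

theorem HasSchurForm.of_submatrix_id_succ {d : ℕ} {M N : Matrix (Fin m) (Fin (k + 1)) ℝ}
    (hM : ∀ i : Fin m, M i 0 = 0) (hN : ∀ i : Fin m, N i 0 = 0)
    (h : HasSchurForm (d + 1) (M.submatrix id Fin.succ) (N.submatrix id Fin.succ)) :
    HasSchurForm d M N :=
  let ⟨Q, hQ, Z, hZ, hMZ, hNZ⟩ := h
  ⟨Q, hQ, padFirst Z, padFirst_mem_orthogonalGroup hZ,
    isZeroBelowSubdiag_mul_padFirst hM hMZ, isZeroBelowSubdiag_mul_padFirst hN hNZ⟩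

theorem HasSchurForm.of_submatrix_castSucc {d : ℕ} {M N : Matrix (Fin (m + 1)) (Fin (k + 1)) ℝ}
    (hd : m ≤ k + d) (hM : ∀ j : Fin k, M (Fin.last m) j.castSucc = 0)
    (hN : ∀ j : Fin k, N (Fin.last m) j.castSucc = 0)
    (h : HasSchurForm d (M.submatrix Fin.castSucc Fin.castSucc)
      (N.submatrix Fin.castSucc Fin.castSucc)) :
    HasSchurForm d M N :=
  let ⟨Q, hQ, Z, hZ, hMZ, hNZ⟩ := h
  ⟨padLast Q, padLast_mem_orthogonalGroup hQ, padLast Z, padLast_mem_orthogonalGroup hZ,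
    isZeroBelowSubdiag_padLast_mul_mul hd hM hMZ, isZeroBelowSubdiag_padLast_mul_mul hd hN hNZ⟩

theorem hasSchurForm_of_lt (A B : Matrix (Fin m) (Fin k) ℝ) (h : k < m) :
    HasSchurForm (m - k) A B := by
  induction k generalizing m with
  | zero => exact ⟨1, one_mem _, 1, one_mem _, fun _ j => j.elim0, fun _ j => j.elim0⟩
  | succ k ih =>
    obtain ⟨m, rfl⟩ : ∃ m', m = m' + 1 := ⟨m - 1, by omega⟩
    obtain ⟨x, hx, hxB⟩ := exists_vecMul_eq_zero_of_lt B h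
    obtain ⟨Q, hQ, Z, hZ, r, hA, hB⟩ :=
      exists_orthogonal_row_eq_single A B hx hxB (Fin.last m) (Fin.last k)
    refine .of_mul_mul hQ hZ (.of_submatrix_castSucc (by omega) (fun j => ?_) (fun j => ?_) ?_)
    · simpa using congrFun hA j.castSucc
    · exact congrFun hB _
    · rw [Nat.add_sub_add_right]
      exact ih _ _ (by omega)

theorem hasSchurForm_zero_of_det_pencilPolyR_eq_zero {S T : Matrix (Fin n) (Fin n) ℝ}
    (h : (pencilPolyR S T).det = 0) : HasSchurForm 0 S T := by
  induction n with
  | zero => exact ⟨1, one_mem _, 1, one_mem _, fun i => i.elim0, fun i => i.elim0⟩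
  | succ n ih =>
    obtain ⟨x, hx, hTx⟩ := exists_mulVec_eq_zero_of_det_pencilPolyR_eq_zero h
    obtain ⟨Q, hQ, Z, hZ, r, hS, hT⟩ := exists_orthogonal_col_eq_single S T hx hTx 0 0
    refine .of_mul_mul hQ hZ ?_
    have hS' (i : Fin (n + 1)) : (Q * S * Z) i 0 = (Pi.single 0 r : Fin (n + 1) → ℝ) i :=
      congrFun hS i
    have hT' (i : Fin (n + 1)) : (Q * T * Z) i 0 = 0 := congrFun hT i
    by_cases hr : r = 0
    · refine .of_submatrix_id_succ (fun i => by simp [hS', hr]) hT' ?_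
      simpa using hasSchurForm_of_lt ((Q * S * Z).submatrix id Fin.succ)
        ((Q * T * Z).submatrix id Fin.succ) n.lt_succ_self
    · refine .of_submatrix_succ (fun i => by simp [hS']) (fun i => hT' _) (ih ?_)
      have hdet := det_pencilPolyR_mul_mul Q S T Z
      rw [h, mul_zero, det_pencilPolyR_of_col_zero hS hT] at hdet
      exact (mul_eq_zero.1 hdet).resolve_left (C_ne_zero.2 hr)

theorem IsZeroBelowSubdiag.diagonal_mul_mul {d : ℕ} {M : Matrix (Fin m) (Fin k) ℝ}
    (h : IsZeroBelowSubdiag d M) (u : Fin m → ℝ) (v : Fin k → ℝ) :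
    IsZeroBelowSubdiag d (diagonal u * M * diagonal v) := fun i j hij => by
  simp [h i j hij]

theorem upperTriR_of_isZeroBelowSubdiag_zero {M : Matrix (Fin n) (Fin n) ℝ}
    (h : IsZeroBelowSubdiag 0 M) : UpperTriR M :=
  fun i j hij => h i j hij

end

/-- Every real singular pencil admits a real upper triangular generalized Schur form via
special orthogonal transformations. -/
theorem real_singular_pencil_schur_form (S T : Matrix (Fin n) (Fin n) ℝ)
    (hsing : (pencilPolyR S T).det = 0) :
    ∃ Q Z : Matrix (Fin n) (Fin n) ℝ,
      Q ∈ Matrix.orthogonalGroup (Fin n) ℝ ∧ Z ∈ Matrix.orthogonalGroup (Fin n) ℝ ∧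
      Q.det = 1 ∧ Z.det = 1 ∧
      UpperTriR (Q * S * Z) ∧ UpperTriR (Q * T * Z) := by
  obtain ⟨Q, hQ, Z, hZ, hS, hT⟩ := hasSchurForm_zero_of_det_pencilPolyR_eq_zero hsing
  obtain ⟨u, hu, huQ⟩ := exists_diagonal_mem_orthogonalGroup_det_eq hQ
  obtain ⟨v, hv, hvZ⟩ := exists_diagonal_mem_orthogonalGroup_det_eq hZ
  have hassoc (M : Matrix (Fin n) (Fin n) ℝ) :
      diagonal u * Q * M * (Z * diagonal v) = diagonal u * (Q * M * Z) * diagonal v := by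
    simp only [Matrix.mul_assoc]
  refine ⟨diagonal u * Q, Z * diagonal v, mul_mem hu hQ, mul_mem hZ hv, ?_, ?_, ?_, ?_⟩
  · rw [det_mul, huQ, det_mul_self_of_mem_orthogonalGroup hQ]
  · rw [det_mul, hvZ, det_mul_self_of_mem_orthogonalGroup hZ]
  · rw [hassoc]
    exact upperTriR_of_isZeroBelowSubdiag_zero (hS.diagonal_mul_mul u v)
  · rw [hassoc]
    exact upperTriR_of_isZeroBelowSubdiag_zero (hT.diagonal_mul_mul u v)
end
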